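/- arXiv:1910.12645 — 3 statements merged into one kernel-verified Lean document; each statement's English description precedes it below -/
import Mathlib

section
/- Let (X, μ, T) be a rank-one measure-preserving transformation and let k > 1. Suppose there exists N ∈ ℕ such that k divides h_N and k divides s_{n,i} for all n ≥ N and all 0 < i ≤ r_n. Then (X, μ, T) factors onto ℤ/kℤ. -/
/-!
The residue modulo `k` of the height of a point in the stage-`n` tower does not depend on the
stage `n ≥ N`: the stage-`(n+1)` tower is a stack of copies of the stage-`n` tower whose bottoms sit
at heights `∑ (h n + s n i)`, all multiples of `k`. Almost every point lies in the towers of all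
late stages and is infinitely often below their top levels, so this residue `φ` satisfies
`φ ∘ T = φ + 1 mod k` almost everywhere. Since `T` preserves `μ` and permutes the fibres of `φ`
cyclically, every fibre has measure `1 / k`.

The levels `T^[i] '' B n` are images, and images of null sets under `T` need not be null, so the
measure-theoretic work is done with the images of `B n ∩ goodSet`, where `goodSet` is a conull
`T`-invariant set on which `Tinv` inverts `T`. That the towers built from these exhaust `X`
combines density of the levels with nonatomicity: a set contained in a single level of every late
tower is null.
-/

open MeasureTheory ENNReal

noncomputable section

/-- `T` factors onto the cyclic system `ℤ/kℤ` (:= `{0,…,k-1}` with uniform measure and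
the `+1 mod k` map): there is a measurable map `φ` with values (a.e.) in `{0,…,k-1}`,
whose fibers all have measure `1/k`, and which intertwines `T` with `+1 mod k` a.e. -/
def FactorsOntoCyclic {X : Type*} [MeasurableSpace X] (μ : Measure X) (T : X → X)
    (k : ℕ) : Prop :=
  ∃ φ : X → ℕ, Measurable φ ∧ (∀ᵐ x ∂μ, φ x < k) ∧
    (∀ j < k, μ (φ ⁻¹' {j}) = 1 / (k : ℝ≥0∞)) ∧
    (∀ᵐ x ∂μ, φ (T x) = (φ x + 1) % k)

/-- `φ` is a factor map from `(X, μ, T)` onto the odometer determined by the sequence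
`(k n)` (with `k n > 1` and `k n ∣ k (n+1)`): `φ x` is a.e. a compatible sequence of
residues, the cylinder sets `{x | φ x n = j}` have the Haar measure `1 / k n`, and `φ`
intertwines `T` with the `+1` map of the odometer a.e.  Since the compatible sequences
with the correct cylinder measures carry a unique probability measure (the Haar
measure of the inverse limit group), this says exactly that `φ` is a measure-preserving
factor map onto the odometer. -/
def IsOdometerFactorMap {X : Type*} [MeasurableSpace X] (μ : Measure X) (T : X → X)
    (k : ℕ → ℕ) (φ : X → ℕ → ℕ) : Prop :=
  Measurable φ ∧
    (∀ᵐ x ∂μ, (∀ n, φ x n < k n) ∧ ∀ m n, m ≤ n → φ x n % k m = φ x m) ∧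
    (∀ n, ∀ j < k n, μ {x | φ x n = j} = 1 / (k n : ℝ≥0∞)) ∧
    (∀ᵐ x ∂μ, ∀ n, φ (T x) n = (φ x n + 1) % k n)

/-- `T` factors onto the odometer determined by `(k n)`. -/
def FactorsOntoOdometer {X : Type*} [MeasurableSpace X] (μ : Measure X) (T : X → X)
    (k : ℕ → ℕ) : Prop :=
  ∃ φ : X → ℕ → ℕ, IsOdometerFactorMap μ T k φ

/-- `T` is isomorphic to the odometer determined by `(k n)`: there is a factor map onto
the odometer which is invertible on a set of full measure. -/
def IsomorphicToOdometer {X : Type*} [MeasurableSpace X] (μ : Measure X) (T : X → X)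
    (k : ℕ → ℕ) : Prop :=
  ∃ φ : X → ℕ → ℕ, IsOdometerFactorMap μ T k φ ∧
    ∃ ψ : (ℕ → ℕ) → X, Measurable ψ ∧ ∀ᵐ x ∂μ, ψ (φ x) = x

/-- A rank-one measure-preserving transformation of `(X, μ)`, presented by its cutting
and stacking data: the transformation `T` (invertible a.e., measure-preserving), the
cutting parameter `r`, the spacer parameter `s` (with `s n i` meaningful for
`1 ≤ i ≤ r n`), the tower heights `h`, the tower bases `B n`, the pieces `Bp n i` of
the base (`1 ≤ i ≤ r n`), and the spacer levels `C n i j` (`1 ≤ j ≤ s n i`). -/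
structure RankOne (X : Type*) [MeasurableSpace X] (μ : Measure X) where
  T : X → X
  Tinv : X → X
  mpT : MeasurePreserving T μ μ
  mpTinv : MeasurePreserving Tinv μ μ
  inv_left : ∀ᵐ x ∂μ, Tinv (T x) = x
  inv_right : ∀ᵐ x ∂μ, T (Tinv x) = x
  r : ℕ → ℕ
  s : ℕ → ℕ → ℕ
  h : ℕ → ℕ
  B : ℕ → Set X
  Bp : ℕ → ℕ → Set X
  C : ℕ → ℕ → ℕ → Set X
  r_gt_one : ∀ n, 1 < r n
  h_zero : h 0 = 1
  h_succ : ∀ n, h (n + 1) = r n * h n + ∑ i ∈ Finset.Icc 1 (r n), s n i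
  finiteness : Summable fun n => ((h (n + 1) - r n * h n : ℕ) : ℝ) / (h (n + 1) : ℝ)
  B_meas : ∀ n, MeasurableSet (B n)
  Bp_meas : ∀ n i, MeasurableSet (Bp n i)
  C_meas : ∀ n i j, MeasurableSet (C n i j)
  Bp_union : ∀ n, (⋃ i ∈ Finset.Icc 1 (r n), Bp n i) = B n
  Bp_disjoint : ∀ n, ∀ i ∈ Finset.Icc 1 (r n), ∀ j ∈ Finset.Icc 1 (r n), i ≠ j →
    Disjoint (Bp n i) (Bp n j)
  Bp_measure : ∀ n, ∀ i ∈ Finset.Icc 1 (r n), μ (Bp n i) = μ (B n) / (r n : ℝ≥0∞)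
  levels_disjoint : ∀ n, ∀ i j, i < j → j < h n → Disjoint (T^[i] '' B n) (T^[j] '' B n)
  top_to_spacer : ∀ n, ∀ i ∈ Finset.Icc 1 (r n), s n i ≠ 0 → T^[h n] '' Bp n i = C n i 1
  top_to_next : ∀ n i, 1 ≤ i → i < r n → s n i = 0 → T^[h n] '' Bp n i = Bp n (i + 1)
  spacer_step : ∀ n, ∀ i ∈ Finset.Icc 1 (r n), ∀ j, 1 ≤ j → j < s n i →
    T '' C n i j = C n i (j + 1)
  spacer_to_next : ∀ n i, 1 ≤ i → i < r n → s n i ≠ 0 → T '' C n i (s n i) = Bp n (i + 1)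
  base_succ : ∀ n, B (n + 1) = Bp n 1
  levels_dense : ∀ A : Set X, MeasurableSet A → ∀ ε : ℝ≥0∞, 0 < ε →
    ∃ n, ∃ J : Finset ℕ, (∀ i ∈ J, i < h n) ∧
      μ (symmDiff A (⋃ i ∈ J, T^[i] '' B n)) < ε

open scoped Classical in
/-- `R.I m n` is the set of indices `i < h n` such that the level `T^[i] '' (B n)` of the
stage-`n` tower is contained in the stage-`m` base `B m`. -/
def RankOne.I {X : Type*} [MeasurableSpace X] {μ : Measure X} (R : RankOne X μ)
    (m n : ℕ) : Finset ℕ :=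
  (Finset.range (R.h n)).filter fun i => R.T^[i] '' R.B n ⊆ R.B m

end

open MeasureTheory Set Filter Function Topology

theorem MeasureTheory.exists_measurableSet_subset_measure_ne_zero_diff_ne_zero
    {X : Type*} [MeasurableSpace X] [StandardBorelSpace X] {μ : Measure X} [NullSingletonClass μ]
    {H : Set X} (hH : MeasurableSet H) (hH0 : μ H ≠ 0) :
    ∃ H' ⊆ H, MeasurableSet H' ∧ μ H' ≠ 0 ∧ μ (H \ H') ≠ 0 := by
  classical
  by_contra! hsplit
  obtain ⟨f, hf⟩ := exists_measurableEmbedding_real X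
  let S : ℚ → Set X := fun q => H ∩ f ⁻¹' Iic (q : ℝ)
  let E : ℚ → Set X := fun q => if μ (S q) = 0 then S q else H \ S q
  have hE : ∀ q, μ (E q) = 0 := fun q => by
    by_cases hq : μ (S q) = 0
    · simp [E, hq]
    · simpa [E, hq] using
        hsplit (S q) inter_subset_left (hH.inter (hf.measurable measurableSet_Iic)) hq
  -- a rational strictly between `f x` and `f y` puts `x` or `y` into some `E q`
  have hsep : ∀ x ∈ H \ ⋃ q, E q, ∀ y ∈ H \ ⋃ q, E q, ¬ f x < f y := by
    rintro x ⟨hxH, hx⟩ y ⟨hyH, hy⟩ hxy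
    obtain ⟨q, hxq, hqy⟩ := exists_rat_btwn hxy
    rw [mem_iUnion, not_exists] at hx hy
    by_cases hq : μ (S q) = 0
    · exact hx q (by simpa [E, S, hq] using ⟨hxH, hxq.le⟩)
    · exact hy q (by simpa [E, S, hq] using ⟨hyH, hqy⟩)
  have hsub : (H \ ⋃ q, E q).Subsingleton := fun x hx y hy =>
    hf.injective (le_antisymm (not_lt.1 (hsep y hy x hx)) (not_lt.1 (hsep x hx y hy)))
  exact hH0 (measure_mono_null (subset_sdiff_union H _)
    (measure_union_null (hsub.measure_zero μ) (measure_iUnion_null hE)))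

theorem FactorsOntoCyclic.of_ae_comp_eq {X : Type*} [MeasurableSpace X] {μ : Measure X}
    [IsProbabilityMeasure μ] {T : X → X} (hT : MeasurePreserving T μ μ) {k : ℕ} {φ : X → ℕ}
    (hφ : Measurable φ) (hlt : ∀ᵐ x ∂μ, φ x < k) (hφT : ∀ᵐ x ∂μ, φ (T x) = (φ x + 1) % k) :
    FactorsOntoCyclic μ T k := by
  refine ⟨φ, hφ, hlt, fun c hc => ?_, hφT⟩
  set f : ℕ → ℝ≥0∞ := fun c => μ (φ ⁻¹' {c})
  have hstep (c : ℕ) : f c ≤ f ((c + 1) % k) :=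
    calc f c ≤ μ (T ⁻¹' (φ ⁻¹' {(c + 1) % k})) :=
          measure_mono_ae <| hφT.mono fun x hx (hxc : φ x = c) =>
            show φ (T x) = (c + 1) % k by rw [hx, hxc]
      _ = f ((c + 1) % k) :=
          hT.measure_preimage (hφ (measurableSet_singleton _)).nullMeasurableSet
  have hiter {c : ℕ} (hc : c < k) (j : ℕ) : f c ≤ f ((c + j) % k) := by
    induction j with
    | zero => rw [add_zero, Nat.mod_eq_of_lt hc]
    | succ j ih => exact ih.trans ((hstep _).trans_eq (by rw [Nat.mod_add_mod, add_assoc]))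
  have hconst {c : ℕ} (hc : c < k) : f c = f 0 := by
    refine le_antisymm ?_ ?_
    · have := hiter hc (k - c)
      rwa [Nat.add_sub_cancel' hc.le, Nat.mod_self] at this
    · have := hiter (Nat.zero_lt_of_lt hc) c
      rwa [zero_add, Nat.mod_eq_of_lt hc] at this
  have hsum : ∑ c ∈ Finset.range k, f c = 1 := by
    have hrange : φ ⁻¹' ↑(Finset.range k) = {x | φ x < k} := by ext; simp
    rw [sum_measure_preimage_singleton _ fun c _ => hφ (measurableSet_singleton c), hrange,
      (ae_iff_measure_eq (measurableSet_lt hφ measurable_const).nullMeasurableSet).1 hlt,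
      measure_univ]
  rw [Finset.sum_congr rfl fun c hc => hconst (Finset.mem_range.1 hc), Finset.sum_const,
    Finset.card_range, nsmul_eq_mul] at hsum
  show f c = _
  rw [hconst hc, ENNReal.eq_div_iff (by exact_mod_cast (Nat.zero_lt_of_lt hc).ne')
    (ENNReal.natCast_ne_top k), hsum]

namespace RankOne

variable {X : Type*} [MeasurableSpace X] {μ : Measure X} (R : RankOne X μ)

def invSet : Set X := {x | R.Tinv (R.T x) = x ∧ R.T (R.Tinv x) = x}

def goodSet : Set X := ⋂ n : ℕ, R.T^[n] ⁻¹' R.invSet ∩ R.Tinv^[n] ⁻¹' R.invSet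

lemma measurableSet_invSet [MeasurableEq X] : MeasurableSet R.invSet :=
  (measurableSet_eq_fun (R.mpTinv.measurable.comp R.mpT.measurable) measurable_id).inter
    (measurableSet_eq_fun (R.mpT.measurable.comp R.mpTinv.measurable) measurable_id)

lemma measurableSet_goodSet [MeasurableEq X] : MeasurableSet R.goodSet :=
  .iInter fun n => (R.measurableSet_invSet.preimage (R.mpT.iterate n).measurable).inter
    (R.measurableSet_invSet.preimage (R.mpTinv.iterate n).measurable)

lemma ae_mem_goodSet : ∀ᵐ x ∂μ, x ∈ R.goodSet := by
  have hinv : ∀ᵐ x ∂μ, x ∈ R.invSet := R.inv_left.and R.inv_right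
  simp only [goodSet, mem_iInter, mem_inter_iff, mem_preimage, ae_all_iff]
  exact fun n => ((R.mpT.iterate n).quasiMeasurePreserving.ae hinv).and
    ((R.mpTinv.iterate n).quasiMeasurePreserving.ae hinv)

lemma measure_compl_goodSet : μ R.goodSetᶜ = 0 := ae_iff.1 R.ae_mem_goodSet

lemma goodSet_subset_invSet : R.goodSet ⊆ R.invSet := fun _ hx => (mem_iInter.1 hx 0).1

lemma T_mem_goodSet {x : X} (hx : x ∈ R.goodSet) : R.T x ∈ R.goodSet := by
  have hinv := R.goodSet_subset_invSet hx
  simp only [goodSet, mem_iInter, mem_inter_iff, mem_preimage] at hx ⊢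
  refine fun n => ⟨by simpa only [← iterate_succ_apply] using (hx (n + 1)).1, ?_⟩
  cases n with
  | zero => simpa using (hx 1).1
  | succ n => rw [iterate_succ_apply, hinv.1]; exact (hx n).2

lemma Tinv_mem_goodSet {x : X} (hx : x ∈ R.goodSet) : R.Tinv x ∈ R.goodSet := by
  have hinv := R.goodSet_subset_invSet hx
  simp only [goodSet, mem_iInter, mem_inter_iff, mem_preimage] at hx ⊢
  refine fun n => ⟨?_, by simpa only [← iterate_succ_apply] using (hx (n + 1)).2⟩
  cases n with
  | zero => simpa using (hx 1).2
  | succ n => rw [iterate_succ_apply, hinv.2]; exact (hx n).1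

lemma iterate_T_mem_goodSet {x : X} (hx : x ∈ R.goodSet) (n : ℕ) : R.T^[n] x ∈ R.goodSet := by
  induction n with
  | zero => exact hx
  | succ n ih => rw [iterate_succ_apply']; exact R.T_mem_goodSet ih

lemma iterate_Tinv_iterate_T {x : X} (hx : x ∈ R.goodSet) (n : ℕ) :
    R.Tinv^[n] (R.T^[n] x) = x := by
  induction n generalizing x with
  | zero => rfl
  | succ n ih =>
    rw [iterate_succ_apply R.T, iterate_succ_apply' R.Tinv, ih (R.T_mem_goodSet hx),
      (R.goodSet_subset_invSet hx).1]

lemma iterate_T_iterate_Tinv {x : X} (hx : x ∈ R.goodSet) (n : ℕ) :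
    R.T^[n] (R.Tinv^[n] x) = x := by
  induction n generalizing x with
  | zero => rfl
  | succ n ih =>
    rw [iterate_succ_apply R.Tinv, iterate_succ_apply' R.T, ih (R.Tinv_mem_goodSet hx),
      (R.goodSet_subset_invSet hx).2]

def level (n i : ℕ) : Set X := R.T^[i] '' R.B n

def goodLevel (n i : ℕ) : Set X := R.T^[i] '' (R.B n ∩ R.goodSet)

def goodTower (n : ℕ) : Set X := ⋃ i ∈ Finset.range (R.h n), R.goodLevel n i

lemma goodLevel_subset_level (n i : ℕ) : R.goodLevel n i ⊆ R.level n i :=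
  image_mono inter_subset_left

lemma goodLevel_eq (n i : ℕ) :
    R.goodLevel n i = R.Tinv^[i] ⁻¹' (R.B n ∩ R.goodSet) ∩ R.goodSet := by
  ext y
  constructor
  · rintro ⟨b, hb, rfl⟩
    exact ⟨by rwa [mem_preimage, R.iterate_Tinv_iterate_T hb.2], R.iterate_T_mem_goodSet hb.2 i⟩
  · rintro ⟨hy, hyG⟩
    exact ⟨_, hy, R.iterate_T_iterate_Tinv hyG i⟩

lemma measurableSet_goodLevel [MeasurableEq X] (n i : ℕ) : MeasurableSet (R.goodLevel n i) := by
  rw [goodLevel_eq]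
  exact (((R.B_meas n).inter R.measurableSet_goodSet).preimage
    (R.mpTinv.iterate i).measurable).inter R.measurableSet_goodSet

lemma measure_goodLevel [MeasurableEq X] (n i : ℕ) : μ (R.goodLevel n i) = μ (R.B n) := by
  rw [goodLevel_eq, measure_inter_conull R.measure_compl_goodSet,
    (R.mpTinv.iterate i).measure_preimage
      ((R.B_meas n).inter R.measurableSet_goodSet).nullMeasurableSet,
    measure_inter_conull R.measure_compl_goodSet]

lemma iterate_mem_goodLevel {y : X} {n i : ℕ} (hy : y ∈ R.goodLevel n i) (q : ℕ) :
    R.T^[q] y ∈ R.goodLevel n (q + i) := by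
  obtain ⟨b, hb, rfl⟩ := hy
  exact ⟨b, hb, iterate_add_apply _ _ _ _⟩

lemma mem_goodLevel_of_iterate_mem {y : X} (hy : y ∈ R.goodSet) {n i q : ℕ}
    (h : R.T^[q] y ∈ R.goodLevel n (i + q)) : y ∈ R.goodLevel n i := by
  rw [goodLevel_eq] at h ⊢
  refine ⟨?_, hy⟩
  have := h.1
  rwa [mem_preimage, iterate_add_apply, R.iterate_Tinv_iterate_T hy] at this

lemma level_disjoint {n i j : ℕ} (hij : i ≠ j) (hi : i < R.h n) (hj : j < R.h n) :
    Disjoint (R.level n i) (R.level n j) := by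
  rcases hij.lt_or_gt with h | h
  · exact R.levels_disjoint n i j h hj
  · exact (R.levels_disjoint n j i h hi).symm

lemma h_pos (n : ℕ) : 0 < R.h n := by
  induction n with
  | zero => simp [R.h_zero]
  | succ n ih => rw [R.h_succ]; have := R.r_gt_one n; positivity

lemma h_strictMono : StrictMono R.h := strictMono_nat_of_lt_succ fun n => by
  have := Nat.mul_le_mul_right (R.h n) (R.r_gt_one n)
  have := R.h_pos n
  rw [R.h_succ]
  omega

/-- The height in the stage-`(n+1)` tower at which the `j`-th copy (`1 ≤ j ≤ r n`) of the
stage-`n` tower starts; `copyStart n (r n + 1) = h (n + 1)`. -/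
def copyStart (n j : ℕ) : ℕ := ∑ m ∈ Finset.range (j - 1), (R.h n + R.s n (m + 1))

lemma copyStart_one (n : ℕ) : R.copyStart n 1 = 0 := by simp [copyStart]

lemma copyStart_succ (n : ℕ) {j : ℕ} (hj : 1 ≤ j) :
    R.copyStart n (j + 1) = R.copyStart n j + (R.h n + R.s n j) := by
  obtain ⟨j, rfl⟩ := Nat.exists_eq_add_of_le hj
  simp only [copyStart, Nat.add_sub_cancel_left, Nat.add_sub_cancel]
  rw [add_comm 1 j, Finset.sum_range_succ]

lemma copyStart_mono (n : ℕ) : Monotone (R.copyStart n) := fun _ _ h =>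
  Finset.sum_le_sum_of_subset (Finset.range_subset_range.2 (by omega))

lemma copyStart_last (n : ℕ) : R.copyStart n (R.r n + 1) = R.h (n + 1) := by
  rw [R.h_succ n, copyStart, Nat.add_sub_cancel, Finset.sum_add_distrib, Finset.sum_const,
    Finset.card_range, smul_eq_mul, ← Finset.Ico_add_one_right_eq_Icc,
    Finset.sum_Ico_eq_sum_range]
  simp [add_comm 1]

lemma add_copyStart_lt {n i j : ℕ} (hi : i < R.h n) (hj : j ≤ R.r n) :
    i + R.copyStart n j < R.h (n + 1) := by
  have := R.copyStart_mono n (Nat.le_succ_of_le hj)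
  have := R.copyStart_succ n (R.r_gt_one n).le
  have := R.copyStart_last n
  have := R.copyStart_mono n hj
  omega

lemma image_iterate_Bp_eq_C {n j : ℕ} (hj : j ∈ Finset.Icc 1 (R.r n)) {l : ℕ} (hl : 1 ≤ l)
    (hls : l ≤ R.s n j) : R.T^[R.h n + (l - 1)] '' R.Bp n j = R.C n j l := by
  induction l, hl using Nat.le_induction with
  | base => simpa using R.top_to_spacer n j hj (by omega)
  | succ l hl ih =>
    rw [show R.h n + (l + 1 - 1) = 1 + (R.h n + (l - 1)) by omega, iterate_add, image_comp,
      ih (by omega), iterate_one, R.spacer_step n j hj l hl (by omega)]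

lemma image_iterate_Bp {n j : ℕ} (hj : 1 ≤ j) (hjr : j < R.r n) :
    R.T^[R.h n + R.s n j] '' R.Bp n j = R.Bp n (j + 1) := by
  by_cases hs : R.s n j = 0
  · rw [hs, add_zero]
    exact R.top_to_next n j hj hjr hs
  · rw [show R.h n + R.s n j = 1 + (R.h n + (R.s n j - 1)) by omega, iterate_add, image_comp,
      R.image_iterate_Bp_eq_C (Finset.mem_Icc.2 ⟨hj, hjr.le⟩) (by omega) le_rfl, iterate_one,
      R.spacer_to_next n j hj hjr hs]

lemma image_iterate_copyStart {n j : ℕ} (hj : 1 ≤ j) (hjr : j ≤ R.r n) :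
    R.T^[R.copyStart n j] '' R.B (n + 1) = R.Bp n j := by
  induction j, hj using Nat.le_induction with
  | base => simp [copyStart_one, R.base_succ]
  | succ j hj ih =>
    rw [R.copyStart_succ n hj, add_comm, iterate_add, image_comp, ih (by omega),
      R.image_iterate_Bp hj (by omega)]

lemma level_eq_iUnion (n i : ℕ) :
    R.level n i = ⋃ j ∈ Finset.Icc 1 (R.r n), R.level (n + 1) (i + R.copyStart n j) := by
  rw [level, ← R.Bp_union n, image_iUnion₂]
  refine iUnion₂_congr fun j hj => ?_
  rw [Finset.mem_Icc] at hj
  rw [level, iterate_add, image_comp, R.image_iterate_copyStart hj.1 hj.2]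

lemma exists_iUnion_level_eq_of_le {t t' : ℕ} (htt' : t ≤ t') (J : Finset ℕ)
    (hJ : ∀ i ∈ J, i < R.h t) :
    ∃ J' : Finset ℕ, (∀ i ∈ J', i < R.h t') ∧ ⋃ i ∈ J, R.level t i = ⋃ i ∈ J', R.level t' i := by
  induction t', htt' using Nat.le_induction with
  | base => exact ⟨J, hJ, rfl⟩
  | succ t' _ ih =>
    obtain ⟨J', hJ', hU⟩ := ih
    refine ⟨J'.biUnion fun i => (Finset.Icc 1 (R.r t')).image (i + R.copyStart t' ·), ?_, ?_⟩
    · simp only [Finset.mem_biUnion, Finset.mem_image, Finset.mem_Icc]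
      rintro _ ⟨i, hi, j, hj, rfl⟩
      exact R.add_copyStart_lt (hJ' i hi) hj.2
    · simp_rw [hU, Finset.set_biUnion_biUnion, Finset.set_biUnion_finset_image,
        ← level_eq_iUnion]

lemma exists_late_level_approx {A : Set X} (hA : MeasurableSet A) {ε : ℝ≥0∞} (hε : 0 < ε)
    (n : ℕ) : ∃ t, n ≤ t ∧ ∃ J : Finset ℕ, (∀ i ∈ J, i < R.h t) ∧
      μ (symmDiff A (⋃ i ∈ J, R.level t i)) < ε := by
  obtain ⟨t, J, hJ, happrox⟩ := R.levels_dense A hA ε hε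
  obtain ⟨J', hJ', hU⟩ := R.exists_iUnion_level_eq_of_le (le_max_left t n) J hJ
  exact ⟨max t n, le_max_right t n, J', hJ', hU ▸ happrox⟩

theorem measure_eq_zero_of_subset_level [StandardBorelSpace X] [IsFiniteMeasure μ]
    [NullSingletonClass μ] {S : Set X} (n : ℕ)
    (hS : ∀ t, n ≤ t → ∃ ℓ < R.h t, S ⊆ R.level t ℓ) : μ S = 0 := by
  -- Approximate one half `H'` of the hull of `S` by levels of a late tower: the level containing
  -- `S` lies either inside the approximation, making `S \ H'` small, or outside, making `S ∩ H'`
  -- small.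
  by_contra hS0
  set H := toMeasurable μ S
  obtain ⟨H', hH'H, hH', hH'0, hHH'0⟩ :=
    exists_measurableSet_subset_measure_ne_zero_diff_ne_zero (measurableSet_toMeasurable μ S)
      (by rwa [measure_toMeasurable])
  obtain ⟨t, hnt, J, hJ, happrox⟩ := R.exists_late_level_approx hH'
    (lt_min (pos_iff_ne_zero.2 hH'0) (pos_iff_ne_zero.2 hHH'0)) n
  obtain ⟨ℓ, hℓ, hSℓ⟩ := hS t hnt
  by_cases hℓJ : ℓ ∈ J
  · have hSH' : μ (S \ H') = μ (H \ H') := by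
      rw [sdiff_eq, sdiff_eq, ← Measure.measure_toMeasurable_inter hH'.compl (measure_ne_top μ S)]
    refine (min_le_right _ _).not_gt (hSH' ▸ (measure_mono fun x hx => ?_).trans_lt happrox)
    exact mem_symmDiff.2 (Or.inr ⟨mem_biUnion hℓJ (hSℓ hx.1), hx.2⟩)
  · have hSH' : μ (S ∩ H') = μ H' := by
      rw [← Measure.measure_toMeasurable_inter hH' (measure_ne_top μ S),
        inter_eq_right.2 hH'H]
    refine (min_le_left _ _).not_gt (hSH' ▸ (measure_mono fun x hx => ?_).trans_lt happrox)
    refine mem_symmDiff.2 (Or.inl ⟨hx.2, fun hxU => ?_⟩)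
    obtain ⟨i, hi, hxi⟩ := mem_iUnion₂.1 hxU
    exact disjoint_left.1 (R.level_disjoint (ne_of_mem_of_not_mem hi hℓJ) (hJ i hi) hℓ) hxi
      (hSℓ hx.1)

lemma measure_Bp_diff_goodLevel [MeasurableEq X] [IsFiniteMeasure μ] {n j : ℕ}
    (hj : j ∈ Finset.Icc 1 (R.r n)) :
    μ (R.Bp n j \ R.goodLevel (n + 1) (R.copyStart n j)) = 0 := by
  rw [Finset.mem_Icc] at hj
  have hsub : R.goodLevel (n + 1) (R.copyStart n j) ⊆ R.Bp n j :=
    (R.goodLevel_subset_level _ _).trans (R.image_iterate_copyStart hj.1 hj.2).subset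
  rw [measure_sdiff hsub (R.measurableSet_goodLevel _ _).nullMeasurableSet (measure_ne_top _ _),
    R.measure_goodLevel, R.base_succ, R.Bp_measure n 1 (Finset.mem_Icc.2 ⟨le_rfl, by omega⟩),
    R.Bp_measure n j (Finset.mem_Icc.2 hj), tsub_self]

lemma ae_mem_goodLevel_of_mem_image_Bp [MeasurableEq X] [IsFiniteMeasure μ] {m j e : ℕ}
    (hj : 1 ≤ j) (hjr : j < R.r m) (he : e < R.h m) :
    ∀ᵐ y ∂μ, y ∈ R.T^[e] '' R.Bp m j → y ∈ R.goodLevel (m + 1) (e + R.copyStart m j) := by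
  -- push `y` forward to the base of the next copy, where almost every point is good
  set q := R.h m + R.s m j - e
  have hnull := (R.mpT.iterate q).quasiMeasurePreserving.preimage_null
    (R.measure_Bp_diff_goodLevel (j := j + 1) (Finset.mem_Icc.2 ⟨by omega, hjr⟩))
  filter_upwards [R.ae_mem_goodSet, measure_eq_zero_iff_ae_notMem.1 hnull] with y hyG hy
  rintro ⟨b, hb, rfl⟩
  refine R.mem_goodLevel_of_iterate_mem hyG (q := q) ?_
  rw [show e + R.copyStart m j + q = R.copyStart m (j + 1) by rw [R.copyStart_succ m hj]; omega]
  by_contra hbad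
  refine hy ⟨?_, hbad⟩
  rw [← iterate_add_apply, show q + e = R.h m + R.s m j by omega, ← R.image_iterate_Bp hj hjr]
  exact mem_image_of_mem _ hb

lemma ae_mem_goodTower_or_level_succ [MeasurableEq X] [IsFiniteMeasure μ] {m e : ℕ}
    (he : e < R.h m) : ∀ᵐ y ∂μ, y ∈ R.level m e →
      y ∈ R.goodTower (m + 1) ∨ y ∈ R.level (m + 1) (e + R.copyStart m (R.r m)) := by
  have hcopies := (eventually_all_finset (Finset.Ico 1 (R.r m))).2 fun j hj =>
    R.ae_mem_goodLevel_of_mem_image_Bp (Finset.mem_Ico.1 hj).1 (Finset.mem_Ico.1 hj).2 he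
  filter_upwards [hcopies] with y hy hye
  rw [level, ← R.Bp_union m, image_iUnion₂, mem_iUnion₂] at hye
  obtain ⟨j, hj, hyj⟩ := hye
  rw [Finset.mem_Icc] at hj
  rcases hj.2.lt_or_eq with hjr | rfl
  · exact Or.inl (mem_biUnion (Finset.mem_range.2 (R.add_copyStart_lt he hj.2))
      (hy j (Finset.mem_Ico.2 ⟨hj.1, hjr⟩) hyj))
  · rw [level, iterate_add, image_comp, R.image_iterate_copyStart hj.1 le_rfl]
    exact Or.inr hyj

lemma measure_level_diff_iUnion_goodTower [StandardBorelSpace X] [IsFiniteMeasure μ]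
    [NullSingletonClass μ] {n i : ℕ} (hi : i < R.h n) :
    μ (R.level n i \ ⋃ m, R.goodTower m) = 0 := by
  set Z := {y | ∀ m e, e < R.h m → y ∈ R.level m e →
    y ∈ R.goodTower (m + 1) ∨ y ∈ R.level (m + 1) (e + R.copyStart m (R.r m))}
  have hZ : μ Zᶜ = 0 := by
    refine ae_iff.1 (ae_all_iff.2 fun m => ae_all_iff.2 fun e => ?_)
    by_cases he : e < R.h m
    · filter_upwards [R.ae_mem_goodTower_or_level_succ he] with y hy using fun _ => hy
    · exact ae_of_all _ fun _ he' => absurd he' he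
  -- off the towers, a point of `Z` climbs through the last copies of the successive towers
  rw [← measure_inter_conull hZ]
  refine R.measure_eq_zero_of_subset_level n fun t hnt => ?_
  induction t, hnt using Nat.le_induction with
  | base => exact ⟨i, hi, fun y hy => hy.1.1⟩
  | succ t _ ih =>
    obtain ⟨ℓ, hℓ, hS⟩ := ih
    refine ⟨ℓ + R.copyStart t (R.r t), R.add_copyStart_lt hℓ le_rfl, fun y hy => ?_⟩
    exact (hy.2 t ℓ hℓ (hS hy)).resolve_left fun hW => hy.1.2 (mem_iUnion.2 ⟨t + 1, hW⟩)

lemma ae_mem_iUnion_goodTower [StandardBorelSpace X] [IsFiniteMeasure μ]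
    [NullSingletonClass μ] : ∀ᵐ y ∂μ, y ∈ ⋃ m, R.goodTower m := by
  refine ae_iff.2 (le_antisymm (le_of_forall_gt_imp_ge_of_dense fun ε hε => ?_) zero_le)
  obtain ⟨t, J, hJ, happrox⟩ := R.levels_dense univ MeasurableSet.univ ε hε
  set U := ⋃ i ∈ J, R.level t i
  have hsub : {y | y ∉ ⋃ m, R.goodTower m} ⊆
      symmDiff univ U ∪ ⋃ i ∈ J, (R.level t i \ ⋃ m, R.goodTower m) := fun y hy => by
    by_cases hyU : y ∈ U
    · obtain ⟨i, hi, hyi⟩ := mem_iUnion₂.1 hyU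
      exact Or.inr (mem_biUnion hi ⟨hyi, hy⟩)
    · exact Or.inl (mem_symmDiff.2 (Or.inl ⟨trivial, hyU⟩))
  refine (measure_mono hsub).trans ((measure_union_le _ _).trans ?_)
  rw [measure_iUnion_null fun i => measure_iUnion_null fun hi =>
    R.measure_level_diff_iUnion_goodTower (hJ i hi), add_zero]
  exact happrox.le

lemma ae_mem_goodLevel_succ [MeasurableEq X] [IsFiniteMeasure μ] (t i : ℕ) :
    ∀ᵐ y ∂μ, y ∈ R.goodLevel t i →
      ∃ j ∈ Finset.Icc 1 (R.r t), y ∈ R.goodLevel (t + 1) (i + R.copyStart t j) := by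
  -- pull `y` back to the base `B t`, almost all of whose points are good in the next tower
  have hbase := (eventually_all_finset (Finset.Icc 1 (R.r t))).2 fun j hj =>
    measure_eq_zero_iff_ae_notMem.1 ((R.mpTinv.iterate i).quasiMeasurePreserving.preimage_null
      (R.measure_Bp_diff_goodLevel hj))
  filter_upwards [hbase] with y hy hyi
  rw [goodLevel_eq] at hyi
  obtain ⟨⟨hbB, -⟩, hyG⟩ := hyi
  rw [← R.Bp_union t, mem_iUnion₂] at hbB
  obtain ⟨j, hj, hbj⟩ := hbB
  have hb : R.Tinv^[i] y ∈ R.goodLevel (t + 1) (R.copyStart t j) :=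
    by_contra fun hbad => hy j hj ⟨hbj, hbad⟩
  exact ⟨j, hj, R.iterate_T_iterate_Tinv hyG i ▸ R.iterate_mem_goodLevel hb i⟩

lemma ae_mem_goodTower_succ [MeasurableEq X] [IsFiniteMeasure μ] (t : ℕ) :
    ∀ᵐ y ∂μ, y ∈ R.goodTower t → y ∈ R.goodTower (t + 1) := by
  filter_upwards [ae_all_iff.2 (R.ae_mem_goodLevel_succ t)] with y hy hyt
  obtain ⟨i, hi, hyi⟩ := mem_iUnion₂.1 hyt
  obtain ⟨j, hj, hyj⟩ := hy i hyi
  exact mem_biUnion (Finset.mem_range.2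
    (R.add_copyStart_lt (Finset.mem_range.1 hi) (Finset.mem_Icc.1 hj).2)) hyj

lemma ae_eventually_mem_goodTower [StandardBorelSpace X] [IsFiniteMeasure μ]
    [NullSingletonClass μ] : ∀ᵐ y ∂μ, ∀ᶠ m in atTop, y ∈ R.goodTower m := by
  filter_upwards [R.ae_mem_iUnion_goodTower, ae_all_iff.2 R.ae_mem_goodTower_succ]
    with y hy hstep
  obtain ⟨n, hn⟩ := mem_iUnion.1 hy
  exact eventually_atTop.2 ⟨n, fun m hm => Nat.le_induction hn (fun m _ => hstep m) m hm⟩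

lemma h_mul_measure_B_le [MeasurableEq X] (n : ℕ) : (R.h n : ℝ≥0∞) * μ (R.B n) ≤ μ univ := by
  have hdisj : (↑(Finset.range (R.h n)) : Set ℕ).PairwiseDisjoint (R.goodLevel n) :=
    fun i hi j hj hij => (R.level_disjoint hij (Finset.mem_range.1 hi) (Finset.mem_range.1 hj)).mono
      (R.goodLevel_subset_level n i) (R.goodLevel_subset_level n j)
  calc (R.h n : ℝ≥0∞) * μ (R.B n) = μ (R.goodTower n) := by
        rw [goodTower, measure_biUnion_finset hdisj fun i _ => R.measurableSet_goodLevel n i]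
        simp [R.measure_goodLevel]
    _ ≤ μ univ := measure_mono (subset_univ _)

lemma tendsto_measure_B [MeasurableEq X] [IsFiniteMeasure μ] :
    Tendsto (fun n => μ (R.B n)) atTop (𝓝 0) := by
  have hinv : Tendsto (fun n => μ univ * ((R.h n : ℝ≥0∞))⁻¹) atTop (𝓝 0) := by
    simpa using ENNReal.Tendsto.const_mul
      (ENNReal.tendsto_inv_nat_nhds_zero.comp R.h_strictMono.tendsto_atTop)
      (Or.inr (measure_ne_top μ univ))
  refine tendsto_of_tendsto_of_tendsto_of_le_of_le tendsto_const_nhds hinv (fun _ => zero_le)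
    fun n => ?_
  rw [← div_eq_mul_inv, ENNReal.le_div_iff_mul_le (Or.inl (by exact_mod_cast (R.h_pos n).ne'))
    (Or.inl (ENNReal.natCast_ne_top _)), mul_comm]
  exact R.h_mul_measure_B_le n

lemma ae_frequently_not_mem_top [MeasurableEq X] [IsFiniteMeasure μ] :
    ∀ᵐ y ∂μ, ∃ᶠ m in atTop, y ∉ R.goodLevel m (R.h m - 1) := by
  have hnull (n : ℕ) : μ (⋂ m ≥ n, R.goodLevel m (R.h m - 1)) = 0 :=
    le_antisymm (ge_of_tendsto R.tendsto_measure_B (eventually_atTop.2 ⟨n, fun m hm =>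
      (measure_mono (iInter₂_subset m hm)).trans (R.measure_goodLevel m _).le⟩)) zero_le
  filter_upwards [measure_eq_zero_iff_ae_notMem.1 (measure_iUnion_null hnull)] with y hy
  simp only [mem_iUnion, mem_iInter, not_exists, not_forall] at hy
  exact frequently_atTop.2 fun n => by simpa using hy n

lemma ae_exists_goodLevel [StandardBorelSpace X] [IsFiniteMeasure μ] [NullSingletonClass μ] :
    ∀ᵐ y ∂μ, ∀ n, ∃ m ≥ n, ∃ i, i + 1 < R.h m ∧ y ∈ R.goodLevel m i := by
  filter_upwards [R.ae_eventually_mem_goodTower, R.ae_frequently_not_mem_top] with y hW htop n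
  obtain ⟨m, hm, hytop, hyW⟩ := frequently_atTop.1 (htop.and_eventually hW) n
  obtain ⟨i, hi, hyi⟩ := mem_iUnion₂.1 hyW
  have hne : i ≠ R.h m - 1 := by rintro rfl; exact hytop hyi
  exact ⟨m, hm, i, by have := Finset.mem_range.1 hi; omega, hyi⟩

def residueSet (k N c : ℕ) : Set X :=
  ⋃ n ≥ N, ⋃ i < R.h n, ⋃ (_ : i % k = c), R.goodLevel n i

/-- `residue k N x = i % k` whenever `x` lies in the good level `i` of a tower of stage `≥ N`. -/
noncomputable def residue (k N : ℕ) (x : X) : ℕ :=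
  ∑ c ∈ Finset.range k, (R.residueSet k N c).indicator (fun _ => c) x

lemma measurable_residue [MeasurableEq X] (k N : ℕ) : Measurable (R.residue k N) :=
  Finset.measurable_sum _ fun _ _ => measurable_const.indicator <|
    .iUnion fun n => .iUnion fun _ => .iUnion fun i => .iUnion fun _ => .iUnion fun _ =>
      R.measurableSet_goodLevel n i

section Residue

variable {R} {k N : ℕ}

lemma dvd_copyStart (hh : k ∣ R.h N) (hs : ∀ n, N ≤ n → ∀ i ∈ Finset.Icc 1 (R.r n), k ∣ R.s n i)
    {n : ℕ} (hn : N ≤ n) (j : ℕ) (hj : j ≤ R.r n + 1) : k ∣ R.copyStart n j := by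
  have hkh {n : ℕ} (hn : N ≤ n) : k ∣ R.h n := by
    induction n, hn using Nat.le_induction with
    | base => exact hh
    | succ n hn ih => rw [R.h_succ]; exact dvd_add (ih.mul_left _) (Finset.dvd_sum (hs n hn))
  refine Finset.dvd_sum fun m hm => dvd_add (hkh hn) (hs n hn _ ?_)
  rw [Finset.mem_range] at hm
  exact Finset.mem_Icc.2 ⟨by omega, by omega⟩

lemma exists_level_modEq_of_mem_level (hc : ∀ n, N ≤ n → ∀ j ≤ R.r n, k ∣ R.copyStart n j)
    {n m i : ℕ} (hnN : N ≤ n) (hnm : n ≤ m) (hi : i < R.h n) {x : X} (hx : x ∈ R.level n i) :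
    ∃ i' < R.h m, i' ≡ i [MOD k] ∧ x ∈ R.level m i' := by
  induction m, hnm using Nat.le_induction with
  | base => exact ⟨i, hi, rfl, hx⟩
  | succ m hnm ih =>
    obtain ⟨i', hi', hmod, hx'⟩ := ih
    rw [level_eq_iUnion, mem_iUnion₂] at hx'
    obtain ⟨j, hj, hxj⟩ := hx'
    rw [Finset.mem_Icc] at hj
    refine ⟨_, R.add_copyStart_lt hi' hj.2, ?_, hxj⟩
    simpa using hmod.add (Nat.modEq_zero_iff_dvd.2 (hc m (hnN.trans hnm) j hj.2))

lemma modEq_of_mem_goodLevel (hc : ∀ n, N ≤ n → ∀ j ≤ R.r n, k ∣ R.copyStart n j)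
    {n n' i i' : ℕ} (hn : N ≤ n) (hn' : N ≤ n') (hi : i < R.h n)
    (hi' : i' < R.h n') {x : X} (hx : x ∈ R.goodLevel n i) (hx' : x ∈ R.goodLevel n' i') :
    i ≡ i' [MOD k] := by
  wlog hnn' : n ≤ n' generalizing n n' i i'
  · exact (this hn' hn hi' hi hx' hx (by omega)).symm
  obtain ⟨i'', hi'', hmod, hx''⟩ :=
    exists_level_modEq_of_mem_level hc hn hnn' hi (R.goodLevel_subset_level n i hx)
  obtain rfl : i'' = i' := by_contra fun hne => disjoint_left.1
    (R.level_disjoint hne hi'' hi') hx'' (R.goodLevel_subset_level _ _ hx')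
  exact hmod.symm

lemma residue_eq (hc : ∀ n, N ≤ n → ∀ j ≤ R.r n, k ∣ R.copyStart n j) (hk : 0 < k) {n i : ℕ}
    (hn : N ≤ n) (hi : i < R.h n) {x : X} (hx : x ∈ R.goodLevel n i) :
    R.residue k N x = i % k := by
  rw [residue, Finset.sum_eq_single_of_mem (i % k) (Finset.mem_range.2 (Nat.mod_lt _ hk))]
  · exact indicator_of_mem (by simp only [residueSet, mem_iUnion]; exact ⟨n, hn, i, hi, rfl, hx⟩) _
  · intro c _ hci
    refine indicator_of_notMem (fun hxc => hci ?_) _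
    simp only [residueSet, mem_iUnion] at hxc
    obtain ⟨n', hn', i', hi', rfl, hx'⟩ := hxc
    exact modEq_of_mem_goodLevel hc hn' hn hi' hi hx' hx

end Residue

end RankOne

theorem statement5 {X : Type*} [MeasurableSpace X] [StandardBorelSpace X]
    (μ : MeasureTheory.Measure X) [MeasureTheory.IsProbabilityMeasure μ]
    [MeasureTheory.NullSingletonClass μ]
    (R : RankOne X μ) (k : ℕ) (hk : 1 < k) (N : ℕ)
    (hh : k ∣ R.h N)
    (hs : ∀ n, N ≤ n → ∀ i ∈ Finset.Icc 1 (R.r n), k ∣ R.s n i) :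
    FactorsOntoCyclic μ R.T k := by
  have hk0 : 0 < k := by omega
  have hc : ∀ n, N ≤ n → ∀ j ≤ R.r n, k ∣ R.copyStart n j :=
    fun n hn j hj => RankOne.dvd_copyStart hh hs hn j (by omega)
  refine .of_ae_comp_eq R.mpT (R.measurable_residue k N) ?_ ?_
  · filter_upwards [R.ae_exists_goodLevel] with x hx
    obtain ⟨m, hm, i, hi, hxi⟩ := hx N
    rw [RankOne.residue_eq hc hk0 hm (by omega) hxi]
    exact Nat.mod_lt _ hk0
  · filter_upwards [R.ae_exists_goodLevel] with x hx
    obtain ⟨m, hm, i, hi, hxi⟩ := hx N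
    rw [RankOne.residue_eq hc hk0 hm (by omega) hxi,
      RankOne.residue_eq hc hk0 hm hi (by simpa [add_comm] using R.iterate_mem_goodLevel hxi 1),
      Nat.mod_add_mod]
end

section
/- Let T be an invertible ergodic measure-preserving transformation of a standard nonatomic Lebesgue probability space (X, μ), and let (k_n) be a sequence of integers with k_n > 1 and k_n dividing k_{n+1} for all n. If T factors onto ℤ/k_nℤ for every n, then T factors onto the odometer associated to (k_n). -/
/-!
Choose cyclic factor maps `φₙ : X → ℤ/kₙℤ`. For consecutive levels, `φₙ₊₁ mod kₙ - φₙ` is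
`T`-invariant, hence a.e. a constant `c` by ergodicity; rotating `φₙ₊₁` by `-c` makes it
reduce to `φₙ` modulo `kₙ`. Doing this inductively gives a compatible family of cyclic
factor maps, which is precisely a factor map onto the odometer.
-/

open MeasureTheory ENNReal

structure IsCyclicFactorMap {X : Type*} [MeasurableSpace X] (μ : Measure X) (T : X → X)
    (k : ℕ) (φ : X → ℕ) : Prop where
  measurable : Measurable φ
  ae_lt : ∀ᵐ x ∂μ, φ x < k
  measure_fiber : ∀ j < k, μ (φ ⁻¹' {j}) = 1 / (k : ℝ≥0∞)
  ae_comp_eq : ∀ᵐ x ∂μ, φ (T x) = (φ x + 1) % k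

lemma FactorsOntoCyclic.exists_isCyclicFactorMap {X : Type*} [MeasurableSpace X]
    {μ : Measure X} {T : X → X} {k : ℕ} (h : FactorsOntoCyclic μ T k) :
    ∃ φ, IsCyclicFactorMap μ T k φ :=
  let ⟨φ, hmeas, hlt, hfiber, hcomp⟩ := h
  ⟨φ, hmeas, hlt, hfiber, hcomp⟩

lemma Nat.eq_of_natCast_eq_zmod {k a b : ℕ} (ha : a < k) (hb : b < k)
    (h : (a : ZMod k) = b) : a = b := by
  rwa [ZMod.natCast_eq_natCast_iff', Nat.mod_eq_of_lt ha, Nat.mod_eq_of_lt hb] at h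

lemma ZMod.natCast_mod_of_dvd {k n : ℕ} (a : ℕ) (h : k ∣ n) :
    ((a % n : ℕ) : ZMod k) = a :=
  (ZMod.natCast_eq_natCast_iff' _ _ k).2 (Nat.mod_mod_of_dvd a h)

/-- `(k - 1) * d` stands for `-d` modulo `k`. -/
lemma Nat.add_mod_eq_iff {k a d j : ℕ} (ha : a < k) (hj : j < k) :
    (a + d) % k = j ↔ a = (j + (k - 1) * d) % k := by
  constructor <;> intro h
  · refine Nat.eq_of_natCast_eq_zmod ha (Nat.mod_lt _ (by omega)) ?_
    rw [← h]
    push_cast [ZMod.natCast_mod, Nat.cast_sub (by omega : 1 ≤ k), ZMod.natCast_self]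
    ring
  · refine Nat.eq_of_natCast_eq_zmod (Nat.mod_lt _ (by omega)) hj ?_
    rw [h]
    push_cast [ZMod.natCast_mod, Nat.cast_sub (by omega : 1 ≤ k), ZMod.natCast_self]
    ring

lemma Nat.mod_eq_of_mod_succ_eq {k a : ℕ → ℕ} (hkd : ∀ n, k n ∣ k (n + 1))
    (hlt : ∀ n, a n < k n) (hsucc : ∀ n, a (n + 1) % k n = a n) {m n : ℕ} (hmn : m ≤ n) :
    a n % k m = a m := by
  induction n, hmn using Nat.le_induction with
  | base => exact Nat.mod_eq_of_lt (hlt m)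
  | succ n hmn ih =>
    have hdvd : k m ∣ k n := Nat.rel_of_forall_rel_succ_of_le (· ∣ ·) hkd hmn
    rw [← Nat.mod_mod_of_dvd _ hdvd, hsucc, ih]

namespace IsCyclicFactorMap

variable {X : Type*} [MeasurableSpace X] {μ : Measure X} {T : X → X} {k : ℕ} {φ : X → ℕ}

lemma add_const_mod (hφ : IsCyclicFactorMap μ T k φ) (d : ℕ) :
    IsCyclicFactorMap μ T k fun x => (φ x + d) % k := by
  obtain ⟨hmeas, hlt, hfiber, hstep⟩ := hφ
  refine ⟨by fun_prop, hlt.mono fun x hx => Nat.mod_lt _ (by omega), ?_, ?_⟩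
  · intro j hj
    have hfiber_eq : (fun x => (φ x + d) % k) ⁻¹' {j} =ᵐ[μ] φ ⁻¹' {(j + (k - 1) * d) % k} :=
      Filter.eventuallyEq_set.mpr <| hlt.mono fun x hx => Nat.add_mod_eq_iff hx hj
    rw [measure_congr hfiber_eq]
    exact hfiber _ (Nat.mod_lt _ (by omega))
  · filter_upwards [hstep, hlt] with x hTx hx
    rw [hTx]
    refine Nat.eq_of_natCast_eq_zmod (Nat.mod_lt _ (by omega)) (Nat.mod_lt _ (by omega)) ?_
    push_cast [ZMod.natCast_mod]
    ring

lemma exists_mod_eq (hErg : Ergodic T μ) {k' : ℕ} (hdvd : k ∣ k') {ψ : X → ℕ}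
    (hφ : IsCyclicFactorMap μ T k φ) (hψ : IsCyclicFactorMap μ T k' ψ) :
    ∃ ψ' : X → ℕ, IsCyclicFactorMap μ T k' ψ' ∧ ∀ᵐ x ∂μ, ψ' x % k = φ x := by
  -- `(ψ x + (k - 1) * φ x) % k` is `ψ x - φ x` in `ℤ/kℤ`
  let g : X → ℕ := fun x => (ψ x + (k - 1) * φ x) % k
  have hg_inv : g ∘ T =ᵐ[μ] g := by
    filter_upwards [hφ.ae_comp_eq, hψ.ae_comp_eq, hφ.ae_lt] with x hφT hψT hx
    refine Nat.eq_of_natCast_eq_zmod (Nat.mod_lt _ (by omega)) (Nat.mod_lt _ (by omega)) ?_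
    simp only [Function.comp_apply, g, hφT, hψT]
    push_cast [ZMod.natCast_mod, ZMod.natCast_mod_of_dvd _ hdvd,
      Nat.cast_sub (by omega : 1 ≤ k), ZMod.natCast_self]
    ring
  have hg_meas : Measurable g :=
    (measurable_from_top (f := (· % k))).comp (hψ.measurable.add (hφ.measurable.const_mul _))
  obtain ⟨c, hc⟩ := hErg.ae_eq_const_of_ae_eq_comp₀ hg_meas.nullMeasurable hg_inv
  refine ⟨fun x => (ψ x + (k - 1) * c) % k', hψ.add_const_mod _, ?_⟩
  filter_upwards [hc, hφ.ae_lt] with x hgx hx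
  have hdiff : (ψ x : ZMod k) - φ x = c := by
    have := congrArg (fun t : ℕ => (t : ZMod k)) hgx
    push_cast [g, Function.const_apply, ZMod.natCast_mod, Nat.cast_sub (by omega : 1 ≤ k),
      ZMod.natCast_self] at this
    linear_combination this
  refine Nat.eq_of_natCast_eq_zmod (Nat.mod_lt _ (by omega)) hx ?_
  push_cast [ZMod.natCast_mod, ZMod.natCast_mod_of_dvd _ hdvd,
    Nat.cast_sub (by omega : 1 ≤ k), ZMod.natCast_self]
  linear_combination hdiff

end IsCyclicFactorMap

section Odometer

variable {X : Type*} [MeasurableSpace X] {μ : Measure X} {T : X → X} {k : ℕ → ℕ}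

lemma exists_compatible_cyclicFactorMaps (hErg : Ergodic T μ) (hkd : ∀ n, k n ∣ k (n + 1))
    (hfac : ∀ n, FactorsOntoCyclic μ T (k n)) :
    ∃ φ : ℕ → X → ℕ, (∀ n, IsCyclicFactorMap μ T (k n) (φ n)) ∧
      ∀ n, ∀ᵐ x ∂μ, φ (n + 1) x % k n = φ n x := by
  choose φ hφ using fun n => (hfac n).exists_isCyclicFactorMap
  choose lift hlift hlift_mod using fun n (ψ : {f // IsCyclicFactorMap μ T (k n) f}) =>
    ψ.2.exists_mod_eq hErg (hkd n) (hφ (n + 1))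
  let ψ : ∀ n, {f // IsCyclicFactorMap μ T (k n) f} := fun n =>
    Nat.rec ⟨φ 0, hφ 0⟩ (fun n p => ⟨lift n p, hlift n p⟩) n
  exact ⟨fun n => (ψ n).1, fun n => (ψ n).2, fun n => hlift_mod n (ψ n)⟩

lemma isOdometerFactorMap_of_compatible (hkd : ∀ n, k n ∣ k (n + 1)) {φ : ℕ → X → ℕ}
    (hφ : ∀ n, IsCyclicFactorMap μ T (k n) (φ n))
    (hcompat : ∀ n, ∀ᵐ x ∂μ, φ (n + 1) x % k n = φ n x) :
    IsOdometerFactorMap μ T k fun x n => φ n x := by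
  have hlt : ∀ᵐ x ∂μ, ∀ n, φ n x < k n := ae_all_iff.mpr fun n => (hφ n).ae_lt
  refine ⟨measurable_pi_lambda _ fun n => (hφ n).measurable, ?_, fun n => (hφ n).measure_fiber,
    ae_all_iff.mpr fun n => (hφ n).ae_comp_eq⟩
  filter_upwards [hlt, ae_all_iff.mpr hcompat] with x hx hsucc
  exact ⟨hx, fun m n hmn => Nat.mod_eq_of_mod_succ_eq hkd hx hsucc hmn⟩

end Odometer

theorem statement10_general {X : Type*} [MeasurableSpace X]
    (μ : MeasureTheory.Measure X)
    (T : X → X)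
    (hErg : Ergodic T μ)
    (k : ℕ → ℕ) (hkd : ∀ n, k n ∣ k (n + 1))
    (hfac : ∀ n, FactorsOntoCyclic μ T (k n)) :
    FactorsOntoOdometer μ T k := by
  obtain ⟨φ, hφ, hcompat⟩ := exists_compatible_cyclicFactorMaps hErg hkd hfac
  exact ⟨_, isOdometerFactorMap_of_compatible hkd hφ hcompat⟩

theorem statement10 {X : Type*} [MeasurableSpace X] [StandardBorelSpace X]
    (μ : MeasureTheory.Measure X) [MeasureTheory.IsProbabilityMeasure μ]
    [MeasureTheory.NullSingletonClass μ]
    (T Tinv : X → X)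
    (hT : MeasureTheory.MeasurePreserving T μ μ)
    (hTinv : MeasureTheory.MeasurePreserving Tinv μ μ)
    (hinv_left : ∀ᵐ x ∂μ, Tinv (T x) = x) (hinv_right : ∀ᵐ x ∂μ, T (Tinv x) = x)
    (hErg : Ergodic T μ)
    (k : ℕ → ℕ) (hk1 : ∀ n, 1 < k n) (hkd : ∀ n, k n ∣ k (n + 1))
    (hfac : ∀ n, FactorsOntoCyclic μ T (k n)) :
    FactorsOntoOdometer μ T k :=
  statement10_general μ T hErg k hkd hfac
end

section
/- Let (k_n) and (k'_n) be sequences of integers greater than 1 with k_n dividing k_{n+1} and k'_n dividing k'_{n+1} for all n. Then the odometers associated to (k_n) and to (k'_n) are isomorphic if and only if {m ∈ ℕ : m divides k_n for some n} = {m ∈ ℕ : m divides k'_n for some n}. -/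
open MeasureTheory ENNReal

/-- The `+1` map of the odometer determined by `(k n)`, acting on sequences of
residues. -/
def odomAdd (k : ℕ → ℕ) : (ℕ → ℕ) → ℕ → ℕ := fun α n => (α n + 1) % k n

/-- `ν` is the Haar (odometer) measure of the odometer determined by `(k n)`:
a probability measure concentrated on the compatible sequences of residues, giving
every level-`n` cylinder the measure `1 / k n`.  (These properties determine `ν`
uniquely.) -/
def IsOdometerMeasure (k : ℕ → ℕ) (ν : MeasureTheory.Measure (ℕ → ℕ)) : Prop :=
  MeasureTheory.IsProbabilityMeasure ν ∧
    (∀ᵐ α ∂ν, (∀ n, α n < k n) ∧ ∀ m n, m ≤ n → α n % k m = α m) ∧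
    (∀ n, ∀ j < k n, ν {α | α n = j} = 1 / (k n : ℝ≥0∞))

/-!
Both directions are read off from the finite cyclic factors `α ↦ α n % m` of an odometer.

If every `k' n` divides some `k (g n)`, reducing coordinates, `α ↦ (α (g n) % k' n)ₙ`, is a
factor map from the `k`-odometer to the `k'`-odometer: it is equivariant, and it is measure
preserving because an odometer measure is determined by its values on cylinders, which are a.e.
sets of the form `{α | α N ∈ J}`. When the divisor sets agree, reducing in the other direction
inverts it.

Conversely, a rotation of `ℤ/mℤ` is a factor of the `k`-odometer `T` only if `m ∣ k N` for some
`N`. Approximating the fibre `A = {g = 0}` of the factor map `g` by a cylinder depending on the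
coordinates `≤ N` shows that `A` is almost invariant under `T^(k N)`, whereas `T^K` moves `A` off
itself whenever `m ∤ K`. An isomorphism transports cyclic factors in both directions.
-/

open Measure Set
open scoped symmDiff

lemma Nat.add_one_mod_eq_iff {i j K : ℕ} (hj : j < K) :
    (i + 1) % K = j ↔ i % K = (j + K - 1) % K := by
  have hj' : (j + K - 1 + 1) % K = j := by
    rw [Nat.sub_add_cancel (by omega), Nat.add_mod_right, Nat.mod_eq_of_lt hj]
  conv_lhs => rw [← hj']
  exact ⟨Nat.ModEq.add_right_cancel' 1, Nat.ModEq.add_right 1⟩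

lemma Nat.card_filter_range_mul_mod_eq {d q j : ℕ} (hj : j < d) :
    ((Finset.range (d * q)).filter (· % d = j)).card = q := by
  refine (Finset.card_nbij' (· / d) (d * · + j) ?_ ?_ ?_ ?_).trans (Finset.card_range q)
  · intro i hi
    simp only [Finset.coe_filter, Finset.mem_range, mem_ofPred_eq, Finset.coe_range,
      mem_Iio] at hi ⊢
    exact Nat.div_lt_of_lt_mul hi.1
  · intro t ht
    simp only [Finset.coe_range, mem_Iio, Finset.coe_filter, Finset.mem_range, mem_ofPred_eq,
      Nat.mul_add_mod_self_left] at ht ⊢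
    refine ⟨?_, Nat.mod_eq_of_lt hj⟩
    calc d * t + j < d * (t + 1) := by rw [Nat.mul_succ]; omega
      _ ≤ d * q := Nat.mul_le_mul_left d ht
  · intro i hi
    simp only [Finset.coe_filter, Finset.mem_range, mem_ofPred_eq] at hi
    simp only [← hi.2, Nat.div_add_mod]
  · intro t _
    simp only [Nat.mul_add_div (j.zero_le.trans_lt hj), Nat.div_eq_of_lt hj, add_zero]

lemma Function.iterate_apply_mod_eq {X : Type*} {f : X → X} {g : X → ℕ} {m : ℕ} {x : X}
    (h : ∀ j, g (f (f^[j] x)) = (g (f^[j] x) + 1) % m) (K : ℕ) :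
    g (f^[K] x) % m = (g x + K) % m := by
  induction K with
  | zero => rfl
  | succ K ih =>
    rw [Function.iterate_succ_apply', h, Nat.mod_mod, ← Nat.mod_add_mod, ih, Nat.mod_add_mod,
      add_assoc]

lemma MeasureTheory.MeasurePreserving.measure_symmDiff_preimage_le {X : Type*} [MeasurableSpace X]
    {μ : Measure X} {f : X → X} (hf : MeasurePreserving f μ μ) {A t : Set X}
    (hA : MeasurableSet A) (ht : MeasurableSet t) (hft : f ⁻¹' t =ᵐ[μ] t) :
    μ (A ∆ (f ⁻¹' A)) ≤ 2 * μ (A ∆ t) := by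
  have hinv : μ (t ∆ (f ⁻¹' t)) = 0 := measure_symmDiff_eq_zero_iff.2 hft.symm
  have hpre : μ ((f ⁻¹' t) ∆ (f ⁻¹' A)) = μ (A ∆ t) := by
    rw [← preimage_symmDiff, hf.measure_preimage (ht.symmDiff hA).nullMeasurableSet,
      symmDiff_comm]
  calc μ (A ∆ (f ⁻¹' A)) ≤ μ (A ∆ t) + μ (t ∆ (f ⁻¹' A)) := measure_symmDiff_le _ _ _
    _ ≤ μ (A ∆ t) + (μ (t ∆ (f ⁻¹' t)) + μ ((f ⁻¹' t) ∆ (f ⁻¹' A))) := by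
      gcongr; exact measure_symmDiff_le _ _ _
    _ = 2 * μ (A ∆ t) := by rw [hinv, hpre, zero_add, two_mul]

lemma MeasureTheory.Measure.QuasiMeasurePreserving.measure_le_measure_symmDiff_preimage_iterate
    {X : Type*} [MeasurableSpace X] {μ : Measure X} {f : X → X}
    (hf : QuasiMeasurePreserving f μ μ) {g : X → ℕ} {m K : ℕ}
    (hgf : ∀ᵐ x ∂μ, g (f x) = (g x + 1) % m) (hK : ¬ m ∣ K) :
    μ {x | g x = 0} ≤ μ ({x | g x = 0} ∆ (f^[K] ⁻¹' {x | g x = 0})) := by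
  have hmoved : ∀ᵐ x ∂μ, g x = 0 → g (f^[K] x) ≠ 0 := by
    filter_upwards [ae_all_iff.2 fun j => (hf.iterate j).ae hgf] with x hx hx0 hKx0
    have := Function.iterate_apply_mod_eq hx K
    rw [hx0, hKx0, Nat.zero_mod, zero_add] at this
    exact hK (Nat.dvd_of_mod_eq_zero this.symm)
  calc μ {x | g x = 0} ≤ μ ({x | g x = 0} \ f^[K] ⁻¹' {x | g x = 0}) :=
        measure_mono_ae (hmoved.mono fun x hx h => ⟨h, hx h⟩)
    _ ≤ _ := measure_mono subset_union_left

lemma FactorsOntoCyclic.of_measurePreserving {X Y : Type*} [MeasurableSpace X]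
    [MeasurableSpace Y] {μ : Measure X} {ν : Measure Y} {T : X → X} {S : Y → Y} {m : ℕ}
    (h : FactorsOntoCyclic ν S m) {φ : X → Y} (hφ : MeasurePreserving φ μ ν)
    (hφT : ∀ᵐ x ∂μ, φ (T x) = S (φ x)) : FactorsOntoCyclic μ T m := by
  obtain ⟨g, hg, hlt, hfib, hgS⟩ := h
  refine ⟨g ∘ φ, hg.comp hφ.measurable, hφ.quasiMeasurePreserving.ae hlt, fun j hj => ?_, ?_⟩
  · rw [preimage_comp, hφ.measure_preimage (hg (measurableSet_singleton j)).nullMeasurableSet,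
      hfib j hj]
  · filter_upwards [hφT, hφ.quasiMeasurePreserving.ae hgS] with x h1 h2
    simp only [Function.comp_apply, h1, h2]

lemma FactorsOntoCyclic.of_leftInverse {X Y : Type*} [MeasurableSpace X]
    [MeasurableSpace Y] {μ : Measure X} {ν : Measure Y} {T : X → X} {S : Y → Y} {m : ℕ}
    (h : FactorsOntoCyclic μ T m) (hT : QuasiMeasurePreserving T μ μ) {φ : X → Y}
    (hφ : MeasurePreserving φ μ ν) (hS : Measurable S) (hφT : ∀ᵐ x ∂μ, φ (T x) = S (φ x))
    {ψ : Y → X} (hψ : Measurable ψ) (hψφ : ∀ᵐ x ∂μ, ψ (φ x) = x) :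
    FactorsOntoCyclic ν S m := by
  obtain ⟨g, hg, hlt, hfib, hgT⟩ := h
  have hgψ : Measurable (g ∘ ψ) := hg.comp hψ
  rw [← hφ.map_eq]
  refine ⟨g ∘ ψ, hgψ, ?_, fun j hj => ?_, ?_⟩
  · refine (ae_map_iff hφ.aemeasurable (measurableSet_lt hgψ measurable_const)).2 ?_
    filter_upwards [hlt, hψφ] with x h1 h2
    simpa [h2] using h1
  · rw [map_apply hφ.measurable (hgψ (measurableSet_singleton j)), ← hfib j hj]
    refine measure_congr ?_
    filter_upwards [hψφ] with x hx
    change (g (ψ (φ x)) = j) = (g x = j)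
    rw [hx]
  · refine (ae_map_iff hφ.aemeasurable (measurableSet_eq_fun (hgψ.comp hS)
      (by fun_prop))).2 ?_
    filter_upwards [hgT, hψφ, hφT, hT.ae hψφ] with x h1 h2 h3 h4
    simp only [Function.comp_apply, ← h3, h4, h1, h2]

namespace Odometer

variable {k k' : ℕ → ℕ}

/-- `α` is a point of the inverse limit `Y` of the groups `ℤ/(k n)ℤ`. -/
def IsCompatible (k α : ℕ → ℕ) : Prop :=
  (∀ n, α n < k n) ∧ ∀ m n, m ≤ n → α n % k m = α m

lemma measurableSet_setOf_isCompatible (k : ℕ → ℕ) : MeasurableSet {α | IsCompatible k α} := by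
  simp only [IsCompatible, ofPred_and, ofPred_forall]
  refine .inter (.iInter fun n => measurableSet_lt (by fun_prop) measurable_const)
    (.iInter fun m => .iInter fun n => .iInter fun _ => measurableSet_eq_fun (by fun_prop)
      (by fun_prop))

lemma IsCompatible.mod_eq_mod {α : ℕ → ℕ}
    (hα : IsCompatible k α) {d i j : ℕ} (hi : d ∣ k i) (hj : d ∣ k j) : α i % d = α j % d := by
  have reduce : ∀ {l}, d ∣ k l → l ≤ max i j → α l % d = α (max i j) % d := fun hl hle => by
    rw [← hα.2 _ _ hle, Nat.mod_mod_of_dvd _ hl]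
  rw [reduce hi (le_max_left i j), reduce hj (le_max_right i j)]

lemma isCompatible_odomAdd (hk : ∀ n, 0 < k n) (hkd : ∀ n, k n ∣ k (n + 1)) {α : ℕ → ℕ}
    (hα : IsCompatible k α) : IsCompatible k (odomAdd k α) := by
  refine ⟨fun n => Nat.mod_lt _ (hk n), fun m n hmn => ?_⟩
  change (α n + 1) % k n % k m = (α m + 1) % k m
  rw [Nat.mod_mod_of_dvd _ (Nat.rel_of_forall_rel_succ_of_le (· ∣ ·) hkd hmn),
    ← Nat.mod_add_mod, hα.2 m n hmn]

lemma IsCompatible.iterate_odomAdd_apply (hk : ∀ n, 0 < k n) (hkd : ∀ n, k n ∣ k (n + 1))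
    {α : ℕ → ℕ} (hα : IsCompatible k α) {n K : ℕ} (hK : k n ∣ K) :
    (odomAdd k)^[K] α n = α n := by
  have hKα : IsCompatible k ((odomAdd k)^[K] α) :=
    Function.Iterate.rec (IsCompatible k) hα (fun _ => isCompatible_odomAdd hk hkd) K
  calc (odomAdd k)^[K] α n = (odomAdd k)^[K] α n % k n := (Nat.mod_eq_of_lt (hKα.1 n)).symm
    _ = (α n + K) % k n :=
      Function.iterate_apply_mod_eq (g := fun β : ℕ → ℕ => β n) (fun _ => rfl) K
    _ = α n := by
      obtain ⟨c, rfl⟩ := hK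
      rw [Nat.add_mul_mod_self_left, Nat.mod_eq_of_lt (hα.1 n)]

lemma measurable_odomAdd (k : ℕ → ℕ) : Measurable (odomAdd k) := by
  unfold odomAdd; fun_prop

/-- `reduceMod g k'` sends a point of the `k`-odometer to the `k'`-odometer when
`k' n ∣ k (g n)` for all `n`. -/
def reduceMod (g k' α : ℕ → ℕ) : ℕ → ℕ := fun n => α (g n) % k' n

lemma measurable_reduceMod (g k' : ℕ → ℕ) : Measurable (reduceMod g k') := by
  unfold reduceMod; fun_prop

lemma isCompatible_reduceMod (hk' : ∀ n, 0 < k' n) (hkd' : ∀ n, k' n ∣ k' (n + 1))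
    {g : ℕ → ℕ} (hg : ∀ n, k' n ∣ k (g n)) {α : ℕ → ℕ} (hα : IsCompatible k α) :
    IsCompatible k' (reduceMod g k' α) := by
  refine ⟨fun n => Nat.mod_lt _ (hk' n), fun m n hmn => ?_⟩
  have hmn' : k' m ∣ k' n := Nat.rel_of_forall_rel_succ_of_le (· ∣ ·) hkd' hmn
  change α (g n) % k' n % k' m = α (g m) % k' m
  rw [Nat.mod_mod_of_dvd _ hmn', hα.mod_eq_mod (hmn'.trans (hg n)) (hg m)]

lemma reduceMod_odomAdd {g : ℕ → ℕ} (hg : ∀ n, k' n ∣ k (g n)) (α : ℕ → ℕ) :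
    reduceMod g k' (odomAdd k α) = odomAdd k' (reduceMod g k' α) := funext fun n => by
  change (α (g n) + 1) % k (g n) % k' n = (α (g n) % k' n + 1) % k' n
  rw [Nat.mod_mod_of_dvd _ (hg n), Nat.mod_add_mod]

lemma IsCompatible.reduceMod_reduceMod {α : ℕ → ℕ} (hα : IsCompatible k α) {g g' : ℕ → ℕ}
    (hg : ∀ n, k' n ∣ k (g n)) (hg' : ∀ n, k n ∣ k' (g' n)) :
    reduceMod g' k (reduceMod g k' α) = α := funext fun n => by
  change α (g (g' n)) % k' (g' n) % k n = α n
  rw [Nat.mod_mod_of_dvd _ (hg' n), hα.mod_eq_mod ((hg' n).trans (hg (g' n))) dvd_rfl,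
    Nat.mod_eq_of_lt (hα.1 n)]

end Odometer

namespace IsOdometerMeasure

open Odometer

variable {k k' : ℕ → ℕ} {ν ν' : Measure (ℕ → ℕ)}

lemma ae_isCompatible (hν : IsOdometerMeasure k ν) : ∀ᵐ α ∂ν, IsCompatible k α := hν.2.1

lemma measure_setOf_apply (hν : IsOdometerMeasure k ν) (N : ℕ) (J : ℕ → Prop)
    [DecidablePred J] :
    ν {α | J (α N)} = ((Finset.range (k N)).filter J).card / k N := by
  have hae : {α : ℕ → ℕ | J (α N)} =ᵐ[ν]
      ⋃ j ∈ (Finset.range (k N)).filter J, {α : ℕ → ℕ | α N = j} := by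
    rw [Filter.eventuallyEq_set]
    filter_upwards [hν.ae_isCompatible] with α hα
    simp [hα.1 N]
  rw [measure_congr hae, measure_biUnion_finset]
  · rw [Finset.sum_congr rfl fun j hj =>
      hν.2.2 N j (Finset.mem_range.1 (Finset.mem_filter.1 hj).1)]
    simp [div_eq_mul_inv]
  · exact fun i _ j _ hij => disjoint_left.2 fun α h1 h2 => hij (h1.symm.trans h2)
  · exact fun j _ => measurableSet_eq_fun (measurable_pi_apply N) measurable_const

lemma measure_setOf_apply_mod_eq (hν : IsOdometerMeasure k ν) {N d j : ℕ} (hkN : 0 < k N)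
    (hd : d ∣ k N) (hj : j < d) : ν {α | α N % d = j} = 1 / d := by
  rw [hν.measure_setOf_apply N (· % d = j)]
  obtain ⟨q, hq⟩ := hd
  have hq0 : q ≠ 0 := by rintro rfl; simp_all
  rw [hq, Nat.card_filter_range_mul_mod_eq hj, Nat.cast_mul]
  calc (q : ℝ≥0∞) / (d * q) = 1 * q / (d * q) := by rw [one_mul]
    _ = 1 / d := ENNReal.mul_div_mul_right _ _ (by exact_mod_cast hq0) (by simp)

lemma cylinder_ae_eq (hν : IsOdometerMeasure k ν) (N : ℕ) (S : Set (Finset.Iic N → ℕ)) :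
    cylinder (Finset.Iic N) S =ᵐ[ν] {α | (fun i : Finset.Iic N => α N % k i) ∈ S} := by
  filter_upwards [hν.ae_isCompatible] with α hα
  have hres : (Finset.Iic N).restrict α = fun i : Finset.Iic N => α N % k i :=
    funext fun i => (hα.2 i N (Finset.mem_Iic.1 i.2)).symm
  change ((Finset.Iic N).restrict α ∈ S) = _
  rw [hres]
  rfl

lemma unique (h : IsOdometerMeasure k ν) (h' : IsOdometerMeasure k ν') : ν = ν' := by
  have := h.1
  have := h'.1
  refine ext_of_generate_finite _ generateFrom_measurableCylinders.symm
    isPiSystem_measurableCylinders (fun s hs => ?_) (by simp)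
  simp only [measurableCylinders_nat, mem_iUnion, mem_singleton_iff] at hs
  obtain ⟨N, S, -, rfl⟩ := hs
  classical
  rw [measure_congr (h.cylinder_ae_eq N S), measure_congr (h'.cylinder_ae_eq N S)]
  let J := fun j => (fun i : Finset.Iic N => j % k i) ∈ S
  exact (h.measure_setOf_apply N J).trans (h'.measure_setOf_apply N J).symm

lemma map_odomAdd (hk : ∀ n, 0 < k n) (hkd : ∀ n, k n ∣ k (n + 1))
    (hν : IsOdometerMeasure k ν) : IsOdometerMeasure k (ν.map (odomAdd k)) := by
  have hm := measurable_odomAdd k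
  have := hν.1
  refine ⟨isProbabilityMeasure_map hm.aemeasurable,
    (ae_map_iff hm.aemeasurable (measurableSet_setOf_isCompatible k)).2
      (hν.ae_isCompatible.mono fun α => isCompatible_odomAdd hk hkd), fun n j hj => ?_⟩
  have hpre : odomAdd k ⁻¹' {β | β n = j} = {α | α n % k n = (j + k n - 1) % k n} :=
    ext fun α => Nat.add_one_mod_eq_iff hj
  rw [map_apply hm (measurableSet_eq_fun (measurable_pi_apply n) measurable_const), hpre,
    hν.measure_setOf_apply_mod_eq (hk n) dvd_rfl (Nat.mod_lt _ (hk n))]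

lemma measurePreserving_odomAdd (hk : ∀ n, 0 < k n) (hkd : ∀ n, k n ∣ k (n + 1))
    (hν : IsOdometerMeasure k ν) : MeasurePreserving (odomAdd k) ν ν :=
  ⟨measurable_odomAdd k, (hν.map_odomAdd hk hkd).unique hν⟩

lemma map_reduceMod (hk : ∀ n, 0 < k n) (hk' : ∀ n, 0 < k' n)
    (hkd' : ∀ n, k' n ∣ k' (n + 1)) (hν : IsOdometerMeasure k ν) {g : ℕ → ℕ}
    (hg : ∀ n, k' n ∣ k (g n)) : IsOdometerMeasure k' (ν.map (reduceMod g k')) := by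
  have hm := measurable_reduceMod g k'
  have := hν.1
  refine ⟨isProbabilityMeasure_map hm.aemeasurable,
    (ae_map_iff hm.aemeasurable (measurableSet_setOf_isCompatible k')).2
      (hν.ae_isCompatible.mono fun α => isCompatible_reduceMod hk' hkd' hg), fun n j hj => ?_⟩
  rw [map_apply hm (measurableSet_eq_fun (measurable_pi_apply n) measurable_const)]
  exact hν.measure_setOf_apply_mod_eq (hk (g n)) (hg n) hj

lemma measurePreserving_reduceMod (hk : ∀ n, 0 < k n) (hk' : ∀ n, 0 < k' n)
    (hkd' : ∀ n, k' n ∣ k' (n + 1)) (hν : IsOdometerMeasure k ν)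
    (hν' : IsOdometerMeasure k' ν') {g : ℕ → ℕ} (hg : ∀ n, k' n ∣ k (g n)) :
    MeasurePreserving (reduceMod g k') ν ν' :=
  ⟨measurable_reduceMod g k', (hν.map_reduceMod hk hk' hkd' hg).unique hν'⟩

lemma factorsOntoCyclic_of_dvd (hk : ∀ n, 0 < k n) (hν : IsOdometerMeasure k ν) {m n : ℕ}
    (h : m ∣ k n) : FactorsOntoCyclic ν (odomAdd k) m := by
  have hm : 0 < m := Nat.pos_of_dvd_of_pos h (hk n)
  refine ⟨fun α => α n % m, by fun_prop, .of_forall fun α => Nat.mod_lt _ hm,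
    fun j hj => hν.measure_setOf_apply_mod_eq (hk n) h hj, .of_forall fun α => ?_⟩
  change (α n + 1) % k n % m = (α n % m + 1) % m
  rw [Nat.mod_mod_of_dvd _ h, Nat.mod_add_mod]

lemma iterate_preimage_cylinder_ae_eq (hk : ∀ n, 0 < k n) (hkd : ∀ n, k n ∣ k (n + 1))
    (hν : IsOdometerMeasure k ν) (N : ℕ) (S : Set (Finset.Iic N → ℕ)) :
    (odomAdd k)^[k N] ⁻¹' cylinder (Finset.Iic N) S =ᵐ[ν] cylinder (Finset.Iic N) S := by
  filter_upwards [hν.ae_isCompatible] with α hα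
  have hres : (Finset.Iic N).restrict ((odomAdd k)^[k N] α) = (Finset.Iic N).restrict α :=
    funext fun i => hα.iterate_odomAdd_apply hk hkd
      (Nat.rel_of_forall_rel_succ_of_le (· ∣ ·) hkd (Finset.mem_Iic.1 i.2))
  change ((Finset.Iic N).restrict ((odomAdd k)^[k N] α) ∈ S) = ((Finset.Iic N).restrict α ∈ S)
  rw [hres]

/-- Rigidity: a cylinder depending on the coordinates `≤ N` is invariant under
`(odomAdd k)^[k N]`, and such cylinders approximate every measurable set. -/
lemma exists_measure_symmDiff_preimage_iterate_lt (hk : ∀ n, 0 < k n)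
    (hkd : ∀ n, k n ∣ k (n + 1)) (hν : IsOdometerMeasure k ν) {A : Set (ℕ → ℕ)}
    (hA : MeasurableSet A) {ε : ℝ≥0∞} (hε : 0 < ε) :
    ∃ N, ν (A ∆ ((odomAdd k)^[k N] ⁻¹' A)) < ε := by
  have := hν.1
  obtain ⟨t, ht, htA⟩ := exists_measure_symmDiff_lt_of_generateFrom_isSetRing (μ := ν)
    isSetRing_measurableCylinders
    ⟨{univ}, countable_singleton _, singleton_subset_iff.2 (univ_mem_measurableCylinders _),
      by simp⟩
    generateFrom_measurableCylinders.symm hA (ENNReal.half_pos hε.ne')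
  simp only [measurableCylinders_nat, mem_iUnion, mem_singleton_iff] at ht
  obtain ⟨N, S, hS, rfl⟩ := ht
  refine ⟨N, (((hν.measurePreserving_odomAdd hk hkd).iterate (k N)).measure_symmDiff_preimage_le
    hA (hS.cylinder _) (hν.iterate_preimage_cylinder_ae_eq hk hkd N S)).trans_lt ?_⟩
  rw [symmDiff_comm, mul_comm, ← ENNReal.lt_div_iff_mul_lt (by simp) (by simp)]
  exact htA

lemma exists_dvd_of_factorsOntoCyclic (hk : ∀ n, 0 < k n) (hkd : ∀ n, k n ∣ k (n + 1))
    (hν : IsOdometerMeasure k ν) {m : ℕ} (h : FactorsOntoCyclic ν (odomAdd k) m) :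
    ∃ N, m ∣ k N := by
  obtain ⟨g, hg, hlt, hfib, hgT⟩ := h
  have := hν.1
  have hm : 0 < m := by
    obtain ⟨α, hα⟩ := hlt.exists
    exact (Nat.zero_le _).trans_lt hα
  have hA : 0 < ν {α | g α = 0} := by
    change 0 < ν (g ⁻¹' {0})
    simp [hfib 0 hm]
  by_contra! hdvd
  obtain ⟨N, hN⟩ :=
    hν.exists_measure_symmDiff_preimage_iterate_lt hk hkd (hg (measurableSet_singleton 0)) hA
  exact ((hν.measurePreserving_odomAdd hk hkd).quasiMeasurePreserving
    |>.measure_le_measure_symmDiff_preimage_iterate hgT (hdvd N)).not_gt hN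

end IsOdometerMeasure

theorem statement12 (k k' : ℕ → ℕ)
    (hk1 : ∀ n, 1 < k n) (hkd : ∀ n, k n ∣ k (n + 1))
    (hk1' : ∀ n, 1 < k' n) (hkd' : ∀ n, k' n ∣ k' (n + 1))
    (ν ν' : MeasureTheory.Measure (ℕ → ℕ))
    (hν : IsOdometerMeasure k ν) (hν' : IsOdometerMeasure k' ν') :
    (∃ φ : (ℕ → ℕ) → ℕ → ℕ, MeasureTheory.MeasurePreserving φ ν ν' ∧
        (∀ᵐ α ∂ν, φ (odomAdd k α) = odomAdd k' (φ α)) ∧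
        ∃ ψ : (ℕ → ℕ) → ℕ → ℕ, Measurable ψ ∧ ∀ᵐ α ∂ν, ψ (φ α) = α) ↔
      {m : ℕ | ∃ n, m ∣ k n} = {m : ℕ | ∃ n, m ∣ k' n} := by
  have hk : ∀ n, 0 < k n := fun n => zero_lt_one.trans (hk1 n)
  have hk' : ∀ n, 0 < k' n := fun n => zero_lt_one.trans (hk1' n)
  constructor
  · rintro ⟨φ, hφ, hφT, ψ, hψ, hψφ⟩
    ext m
    constructor
    · rintro ⟨n, hmn⟩
      exact hν'.exists_dvd_of_factorsOntoCyclic hk' hkd' <|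
        (hν.factorsOntoCyclic_of_dvd hk hmn).of_leftInverse
          (hν.measurePreserving_odomAdd hk hkd).quasiMeasurePreserving hφ
          (Odometer.measurable_odomAdd k') hφT hψ hψφ
    · rintro ⟨n, hmn⟩
      exact hν.exists_dvd_of_factorsOntoCyclic hk hkd <|
        (hν'.factorsOntoCyclic_of_dvd hk' hmn).of_measurePreserving hφ hφT
  · intro hdiv
    choose g hg using fun n => (Set.ext_iff.1 hdiv (k' n)).2 ⟨n, dvd_rfl⟩
    choose g' hg' using fun n => (Set.ext_iff.1 hdiv (k n)).1 ⟨n, dvd_rfl⟩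
    refine ⟨Odometer.reduceMod g k', hν.measurePreserving_reduceMod hk hk' hkd' hν' hg,
      .of_forall (Odometer.reduceMod_odomAdd hg), Odometer.reduceMod g' k,
      Odometer.measurable_reduceMod g' k, ?_⟩
    filter_upwards [hν.ae_isCompatible] with α hα using hα.reduceMod_reduceMod hg hg'
end
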